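/- Let Δ = Δ₁ + ⋯ + Δ_r be a Q-nef-partition of a Q-reflexive polytope Δ ⊆ ℝ^d, let v be an extreme point of Δ*, let F = {x ∈ Δ : ⟨x, v⟩ = −1} be the corresponding facet of Δ, and let F_i = {x ∈ Δ_i : ⟨x, v⟩ = min_{p ∈ Δ_i} ⟨p, v⟩} be the induced faces, so that F = F₁ + ⋯ + F_r. Then conv(F ∩ ℤ^d) = conv(F₁ ∩ ℤ^d) + ⋯ + conv(F_r ∩ ℤ^d). -/

import Mathlib

open Pointwise

noncomputable section

/-- The standard inner product on `n → ℝ`. -/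
def dot {n : Type*} [Fintype n] (x y : n → ℝ) : ℝ := ∑ i, x i * y i

/-- The lattice points of `n → ℝ`: points with integer coordinates. -/
def latt (n : Type*) [Fintype n] : Set (n → ℝ) := {x | ∀ i, ∃ m : ℤ, x i = (m : ℝ)}

/-- Polar dual `S* = {y | ⟨x,y⟩ ≥ -1 ∀ x ∈ S}`. -/
def polarDual {n : Type*} [Fintype n] (S : Set (n → ℝ)) : Set (n → ℝ) :=
  {y | ∀ x ∈ S, -1 ≤ dot x y}

/-- `[S]`: the convex hull of the lattice points of `S`. -/
def latticeHull {n : Type*} [Fintype n] (S : Set (n → ℝ)) : Set (n → ℝ) :=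
  convexHull ℝ (S ∩ latt n)

/-- A polytope: the convex hull of a finite set. -/
def IsPolytope {n : Type*} [Fintype n] (P : Set (n → ℝ)) : Prop :=
  ∃ F : Set (n → ℝ), F.Finite ∧ P = convexHull ℝ F

/-- A lattice polytope: the convex hull of a finite set of lattice points. -/
def IsLatticePolytope {n : Type*} [Fintype n] (P : Set (n → ℝ)) : Prop :=
  ∃ F : Set (n → ℝ), F.Finite ∧ F ⊆ latt n ∧ P = convexHull ℝ F

/-- A full-dimensional polytope `P` with `0` in its interior is Q-reflexive if
`[[P]*] = P*`. -/
def IsQReflexive {n : Type*} [Fintype n] (P : Set (n → ℝ)) : Prop :=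
  IsPolytope P ∧ 0 ∈ interior P ∧ latticeHull (polarDual (latticeHull P)) = polarDual P

/-- A full-dimensional lattice polytope `P` with `0` in its interior is almost reflexive
if `[[P*]*] = P`. -/
def IsAlmostReflexive {n : Type*} [Fintype n] (P : Set (n → ℝ)) : Prop :=
  IsLatticePolytope P ∧ 0 ∈ interior P ∧
    latticeHull (polarDual (latticeHull (polarDual P))) = P

/-- A full-dimensional lattice polytope `P` with `0` in its interior is reflexive
if `P*` is a lattice polytope. -/
def IsReflexive {n : Type*} [Fintype n] (P : Set (n → ℝ)) : Prop :=
  IsLatticePolytope P ∧ 0 ∈ interior P ∧ IsLatticePolytope (polarDual P)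

/-- A Q-nef-partition: a Minkowski-sum decomposition `Δ = Δ₁ + ⋯ + Δ_r` of a
Q-reflexive polytope into polytopes with `0 ∈ Δᵢ`, such that
`[Δ] = [Δ₁] + ⋯ + [Δ_r]`. -/
def IsQNefPartition {d r : ℕ} (Δ : Fin r → Set (Fin d → ℝ)) : Prop :=
  IsQReflexive (∑ i, Δ i) ∧ (∀ i, IsPolytope (Δ i)) ∧
    (∀ i, (0 : Fin d → ℝ) ∈ Δ i) ∧
    latticeHull (∑ i, Δ i) = ∑ i, latticeHull (Δ i)

/-- `∇_j := {y : ⟨x, y⟩ ≥ −δ_{ij} for all x ∈ [Δ_i] and all i}`. -/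
def nabla {d r : ℕ} (Δ : Fin r → Set (Fin d → ℝ)) (j : Fin r) : Set (Fin d → ℝ) :=
  {y | ∀ i, ∀ x ∈ latticeHull (Δ i), -(if i = j then (1 : ℝ) else 0) ≤ dot x y}

/-! Because `Δ` is bounded, an extreme point `v` of `Δ*` must make `⟨·, v⟩` attain `-1` on `Δ`:
otherwise `v ± u ∈ Δ*` for every small `u`. Hence `-1 = min_Δ ⟨·, v⟩ = ∑ mᵢ` with
`mᵢ = min_{Δᵢ} ⟨·, v⟩`. A point of a Minkowski sum `∑ Sᵢ` with `⟨·, v⟩ ≥ mᵢ` on `Sᵢ` lies on the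
level `∑ mᵢ` iff each summand lies on its level `mᵢ`, and a point of `conv S` on a supporting
hyperplane of `S` is a convex combination of the points of `S` on that hyperplane. Applying the
first fact to `Δ = ∑ Δᵢ` gives `F = ∑ Fᵢ`; applying both to `[Δ] = ∑ [Δᵢ]` gives
`[F] = ∑ [Fᵢ]`. -/

open Set Matrix

theorem dot_eq_dotProduct {n : Type*} [Fintype n] (x y : n → ℝ) : dot x y = x ⬝ᵥ y := rfl

theorem sep_inter_eq {α : Type*} (s t : Set α) (p : α → Prop) :
    {x ∈ s | p x} ∩ t = {x ∈ s ∩ t | p x} := by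
  ext x
  simp only [mem_inter_iff, mem_ofPred_eq, and_right_comm]

theorem IsPolytope.isCompact {n : Type*} [Fintype n] {P : Set (n → ℝ)} (hP : IsPolytope P) :
    IsCompact P := by
  obtain ⟨S, hS, rfl⟩ := hP
  exact hS.isCompact_convexHull (𝕜 := ℝ)

theorem IsPolytope.convex {n : Type*} [Fintype n] {P : Set (n → ℝ)} (hP : IsPolytope P) :
    Convex ℝ P := by
  obtain ⟨S, -, rfl⟩ := hP
  exact convex_convexHull ℝ S

theorem latticeHull_subset {n : Type*} [Fintype n] {S : Set (n → ℝ)} (hS : Convex ℝ S) :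
    latticeHull S ⊆ S :=
  convexHull_min inter_subset_left hS

section LinearFace

variable {E : Type*} [AddCommGroup E] [Module ℝ E] (l : E →ₗ[ℝ] ℝ)

theorem convexHull_sep_eq_of_le {s : Set E} {m : ℝ} (hs : ∀ x ∈ s, m ≤ l x) :
    {x ∈ convexHull ℝ s | l x = m} = convexHull ℝ {x ∈ s | l x = m} := by
  refine Subset.antisymm ?_ <| convexHull_min (fun x hx => ⟨subset_convexHull ℝ s hx.1, hx.2⟩)
    ((convex_convexHull ℝ s).inter (convex_hyperplane l.isLinear m))
  rintro _ ⟨hy, hly⟩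
  rw [convexHull_eq] at hy
  obtain ⟨ι, t, w, z, hw₀, hw₁, hz, rfl⟩ := hy
  have hsum : ∑ i ∈ t, w i * m = ∑ i ∈ t, w i * l (z i) := by
    rw [← Finset.sum_mul, hw₁, one_mul, ← hly, Finset.centerMass_eq_of_sum_1 _ _ hw₁, map_sum]
    simp only [map_smul, smul_eq_mul]
  -- the weights are nonnegative, so every point of positive weight lies on the hyperplane
  have hface : ∀ i ∈ t, w i ≠ 0 → l (z i) = m := fun i hi hwi =>
    (mul_left_cancel₀ hwi ((Finset.sum_eq_sum_iff_of_le fun j hj =>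
      mul_le_mul_of_nonneg_left (hs _ (hz j hj)) (hw₀ j hj)).1 hsum i hi)).symm
  rw [← Finset.centerMass_filter_ne_zero]
  refine Finset.centerMass_mem_convexHull _ (fun i hi => hw₀ i (Finset.mem_filter.1 hi).1)
    (by rw [Finset.sum_filter_ne_zero, hw₁]; exact one_pos) fun i hi => ?_
  obtain ⟨hit, hwi⟩ := Finset.mem_filter.1 hi
  exact ⟨hz i hit, hface i hit hwi⟩

variable {ι : Type*} [Fintype ι] {S : ι → Set E} {m : ι → ℝ}

theorem sum_le_apply_of_mem_sum (hS : ∀ i, ∀ x ∈ S i, m i ≤ l x) {x : E}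
    (hx : x ∈ ∑ i, S i) : ∑ i, m i ≤ l x := by
  obtain ⟨g, hg, rfl⟩ := (mem_fintype_sum S x).1 hx
  rw [map_sum]
  exact Finset.sum_le_sum fun i _ => hS i _ (hg i)

theorem sum_sep_eq_of_le (hS : ∀ i, ∀ x ∈ S i, m i ≤ l x) :
    {x ∈ ∑ i, S i | l x = ∑ i, m i} = ∑ i, {x ∈ S i | l x = m i} := by
  ext x
  simp only [mem_ofPred_eq, mem_fintype_sum]
  constructor
  · rintro ⟨⟨g, hg, rfl⟩, hx⟩
    rw [map_sum] at hx
    have hface := (Finset.sum_eq_sum_iff_of_le fun i _ => hS i _ (hg i)).1 hx.symm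
    exact ⟨g, fun i => ⟨hg i, (hface i (Finset.mem_univ i)).symm⟩, rfl⟩
  · rintro ⟨g, hg, rfl⟩
    refine ⟨⟨g, fun i => (hg i).1, rfl⟩, ?_⟩
    rw [map_sum]
    exact Finset.sum_congr rfl fun i _ => (hg i).2

end LinearFace

theorem exists_dot_eq_neg_one_of_mem_extremePoints_polarDual {n : Type*} [Fintype n]
    [Nonempty n] {K : Set (n → ℝ)} (hK : IsCompact K) (hne : K.Nonempty) {v : n → ℝ}
    (hv : v ∈ (polarDual K).extremePoints ℝ) : ∃ x ∈ K, dot x v = -1 := by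
  have hcont (w : n → ℝ) : Continuous fun x : n → ℝ => dot x w :=
    continuous_id.dotProduct continuous_const
  by_contra! hK1
  obtain ⟨x₀, hx₀, hmin⟩ := hK.exists_isMinOn hne (hcont v).continuousOn
  have hgap : 0 < dot x₀ v + 1 := by linarith [(hv.1 x₀ hx₀).lt_of_ne (hK1 x₀ hx₀).symm]
  have hmem (u : n → ℝ) (hu : ∀ x ∈ K, |dot x u| ≤ dot x₀ v + 1) : v + u ∈ polarDual K := by
    intro x hx
    have hsplit : dot x (v + u) = dot x v + dot x u := dotProduct_add x v u
    linarith [neg_abs_le (dot x u), hu x hx, isMinOn_iff.1 hmin x hx]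
  obtain ⟨w, hw⟩ := exists_ne (0 : n → ℝ)
  obtain ⟨C, hC⟩ := hK.exists_bound_of_continuousOn (hcont w).continuousOn
  set ε := (dot x₀ v + 1) / (|C| + 1)
  have hε : 0 < ε := by positivity
  have hsmall : ∀ x ∈ K, |dot x (ε • w)| ≤ dot x₀ v + 1 := fun x hx => by
    rw [dot_eq_dotProduct, dotProduct_smul, smul_eq_mul, abs_mul, abs_of_pos hε]
    calc ε * |x ⬝ᵥ w| ≤ ε * (|C| + 1) := by
          gcongr
          exact ((Real.norm_eq_abs (dot x w)).symm.trans_le (hC x hx)).trans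
            (by linarith [le_abs_self C])
      _ = dot x₀ v + 1 := div_mul_cancel₀ _ (by positivity)
  have hminus : v - ε • w ∈ polarDual K :=
    sub_eq_add_neg v _ ▸ hmem _ (by simpa only [dot_eq_dotProduct, dotProduct_neg, abs_neg])
  have hsub := hv.2 hminus (hmem _ hsmall) (mem_openSegment_sub_add v (ε • w))
  exact hw ((smul_eq_zero.1 (sub_eq_self.1 hsub)).resolve_left hε.ne')

/-- Let `Δ = Δ₁ + ⋯ + Δ_r` be a Q-nef-partition of a Q-reflexive polytope,
let `v` be an extreme point of `Δ*`, `F = {x ∈ Δ : ⟨x,v⟩ = −1}` the corresponding facet,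
and `F_i = {x ∈ Δ_i : ⟨x,v⟩ = min ⟨Δ_i, v⟩}` the induced faces, so that `F = F₁ + ⋯ + F_r`.
Then `conv(F ∩ ℤ^d) = conv(F₁ ∩ ℤ^d) + ⋯ + conv(F_r ∩ ℤ^d)`. -/
theorem facet_lattice_hull_decomposition {d r : ℕ} (hd : 0 < d)
    (Δ : Fin r → Set (Fin d → ℝ)) (hQ : IsQNefPartition Δ)
    (v : Fin d → ℝ) (hv : v ∈ Set.extremePoints ℝ (polarDual (∑ i, Δ i)))
    (F : Set (Fin d → ℝ)) (hF : F = {x ∈ ∑ i, Δ i | dot x v = -1})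
    (Fi : Fin r → Set (Fin d → ℝ))
    (hFi : ∀ i, Fi i = {x ∈ Δ i | dot x v = sInf {t : ℝ | ∃ p ∈ Δ i, dot p v = t}}) :
    F = ∑ i, Fi i ∧
      convexHull ℝ (F ∩ latt (Fin d)) = ∑ i, convexHull ℝ (Fi i ∩ latt (Fin d)) := by
  obtain ⟨⟨hΔ, -, -⟩, hΔi, h0, hlat⟩ := hQ
  let L : (Fin d → ℝ) →ₗ[ℝ] ℝ := (dotProductBilin ℝ ℝ).flip v
  let m i := sInf (L '' Δ i)
  have hFL : F = {x ∈ ∑ i, Δ i | L x = -1} := hF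
  have hFiL : ∀ i, Fi i = {x ∈ Δ i | L x = m i} := hFi
  have hLc : Continuous L := L.continuous_of_finiteDimensional
  have hm i : ∀ x ∈ Δ i, m i ≤ L x := fun x hx =>
    csInf_le ((hΔi i).isCompact.bddBelow_image hLc.continuousOn) (mem_image_of_mem L hx)
  choose p hp hpm using fun i => (hΔi i).isCompact.exists_sInf_image_eq ⟨0, h0 i⟩ hLc.continuousOn
  have hsum : ∑ i, m i = -1 := by
    have : Nonempty (Fin d) := Fin.pos_iff_nonempty.1 hd
    have hpΔ : ∑ i, p i ∈ ∑ i, Δ i := (mem_fintype_sum Δ _).2 ⟨p, hp, rfl⟩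
    obtain ⟨x, hx, hxv⟩ :=
      exists_dot_eq_neg_one_of_mem_extremePoints_polarDual hΔ.isCompact ⟨_, hpΔ⟩ hv
    refine le_antisymm (hxv ▸ sum_le_apply_of_mem_sum L hm hx) ?_
    calc -1 ≤ L (∑ i, p i) := hv.1 _ hpΔ
      _ = ∑ i, m i := by simp only [m, hpm, map_sum]
  refine ⟨by rw [hFL, funext hFiL, ← hsum, sum_sep_eq_of_le L hm], ?_⟩
  have hmZ i : ∀ x ∈ latticeHull (Δ i), m i ≤ L x := fun x hx =>
    hm i x (latticeHull_subset (hΔi i).convex hx)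
  calc convexHull ℝ (F ∩ latt (Fin d))
      = {x ∈ latticeHull (∑ i, Δ i) | L x = -1} := by
        rw [latticeHull, convexHull_sep_eq_of_le L fun x hx => hv.1 x hx.1, hFL, sep_inter_eq]
    _ = ∑ i, {x ∈ latticeHull (Δ i) | L x = m i} := by
        rw [hlat, ← hsum, sum_sep_eq_of_le L hmZ]
    _ = ∑ i, convexHull ℝ (Fi i ∩ latt (Fin d)) := by
        refine Finset.sum_congr rfl fun i _ => ?_
        rw [latticeHull, convexHull_sep_eq_of_le L fun x hx => hm i x hx.1, hFiL, sep_inter_eq]
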